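/- arXiv:2309.14378 — 2 statements merged into one kernel-verified Lean document; each statement's English description precedes it below -/
import Mathlib

section
/- Let A_1, …, A_L be elements of a complex Banach algebra (e.g. complex n×n matrices with the operator norm). Define S(t) = ∏_{k=1}^{L} exp(t A_k) (product in increasing order of k) and S_rev(t) = ∏_{k=L}^{1} exp(t A_k) (product in decreasing order of k). Then the function t ↦ (1/2)(S(t) + S_rev(t)) − exp(t ∑_{k=1}^{L} A_k) is O(t³) as t → 0; that is, there exist C > 0 and δ > 0 such that ‖(1/2)(S(t) + S_rev(t)) − exp(t ∑_k A_k)‖ ≤ C|t|³ for all |t| ≤ δ. -/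
/-!
Each factor satisfies `exp (c • a) = 1 + c • a + c ^ 2 • (a * a) / 2 + O(c ^ 3)`, and such
expansions multiply like truncated power series. Hence an ordered product of exponentials is
`1 + c • ∑ aₖ + c ^ 2 • q + O(c ^ 3)` with `q = ∑ₖ aₖ ^ 2 / 2 + ∑_{j < k} aⱼ * aₖ`. Reversing the
order replaces the cross terms `aⱼ * aₖ` by `aₖ * aⱼ`, so the two values of `q` average to
`(∑ aₖ) ^ 2 / 2`, the second-order coefficient of `exp (c • ∑ aₖ)`.
-/

open NormedSpace Asymptotics Filter Topology

section

variable {𝕂 𝔸 : Type*} [RCLike 𝕂] [NormedRing 𝔸] [NormedAlgebra 𝕂 𝔸]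

def HasSecondOrderExpansion (f : 𝕂 → 𝔸) (a b : 𝔸) : Prop :=
  (fun c => f c - (1 + c • a + c ^ 2 • b)) =O[𝓝 0] fun c => c ^ 3

theorem isBigO_pow_smul_const {n : ℕ} (hn : 3 ≤ n) (v : 𝔸) :
    (fun c : 𝕂 => c ^ n • v) =O[𝓝 0] fun c => c ^ 3 := by
  have hpow : (fun c : 𝕂 => c ^ n) =O[𝓝 0] fun c => c ^ 3 := by
    obtain rfl | hlt := hn.eq_or_lt
    · exact isBigO_refl _ _
    · exact (isLittleO_pow_pow hlt).isBigO
  refine (isBigO_of_le' (c := ‖v‖) _ fun c => ?_).trans hpow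
  rw [norm_smul, mul_comm]

theorem isBigO_one_one_add_smul_add_sq_smul (a b : 𝔸) :
    (fun c : 𝕂 => 1 + c • a + c ^ 2 • b) =O[𝓝 0] fun _ => (1 : 𝕂) :=
  (by fun_prop : Continuous fun c : 𝕂 => 1 + c • a + c ^ 2 • b).continuousAt.isBigO_one 𝕂

namespace HasSecondOrderExpansion

variable {f g : 𝕂 → 𝔸} {a b a' b' : 𝔸}

theorem isBigO_one (hf : HasSecondOrderExpansion f a b) : f =O[𝓝 0] fun _ => (1 : 𝕂) := by
  have hcube : (fun c : 𝕂 => c ^ 3) =O[𝓝 0] fun _ => (1 : 𝕂) :=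
    (by fun_prop : Continuous fun c : 𝕂 => c ^ 3).continuousAt.isBigO_one 𝕂
  simpa using (hf.trans hcube).add (isBigO_one_one_add_smul_add_sq_smul a b)

theorem mul (hf : HasSecondOrderExpansion f a b) (hg : HasSecondOrderExpansion g a' b') :
    HasSecondOrderExpansion (f * g) (a + a') (b + a * a' + b') := by
  have hpoly (c : 𝕂) : (1 + c • a + c ^ 2 • b) * (1 + c • a' + c ^ 2 • b') -
      (1 + c • (a + a') + c ^ 2 • (b + a * a' + b')) =
      c ^ 3 • (a * b' + b * a') + c ^ 4 • (b * b') := by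
    simp only [mul_add, add_mul, smul_mul_assoc, mul_smul_comm, one_mul, mul_one]
    module
  have hfg : (fun c => f c * (g c - (1 + c • a' + c ^ 2 • b'))) =O[𝓝 0] fun c => c ^ 3 := by
    simpa using hf.isBigO_one.mul hg
  have hgf : (fun c => (f c - (1 + c • a + c ^ 2 • b)) * (1 + c • a' + c ^ 2 • b'))
      =O[𝓝 0] fun c => c ^ 3 := by
    simpa using IsBigO.mul hf (isBigO_one_one_add_smul_add_sq_smul a' b')
  have hrem := (isBigO_pow_smul_const (𝕂 := 𝕂) le_rfl (a * b' + b * a')).add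
    (isBigO_pow_smul_const (𝕂 := 𝕂) (n := 4) (by norm_num) (b * b'))
  refine ((hfg.add hgf).add hrem).congr_left fun c => ?_
  rw [← hpoly, Pi.mul_apply, mul_sub, sub_mul]
  abel

theorem midpoint (hf : HasSecondOrderExpansion f a b) (hg : HasSecondOrderExpansion g a b') :
    HasSecondOrderExpansion (fun c => (2 : 𝕂)⁻¹ • (f c + g c)) a ((2 : 𝕂)⁻¹ • (b + b')) := by
  refine ((hf.const_smul_left (2 : 𝕂)⁻¹).add (hg.const_smul_left (2 : 𝕂)⁻¹)).congr_left
    fun c => ?_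
  simp only [Pi.smul_apply]
  module

theorem isBigO_sub (hf : HasSecondOrderExpansion f a b) (hg : HasSecondOrderExpansion g a b) :
    (f - g) =O[𝓝 0] fun c => c ^ 3 :=
  (hf.sub hg).congr_left fun c => by simp

end HasSecondOrderExpansion

variable (𝕂) in
noncomputable def expProdSecondCoeff : List 𝔸 → 𝔸
  | [] => 0
  | a :: l => (2 : 𝕂)⁻¹ • (a * a) + a * l.sum + expProdSecondCoeff l

theorem expProdSecondCoeff_append_singleton (l : List 𝔸) (a : 𝔸) :
    expProdSecondCoeff 𝕂 (l ++ [a]) =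
      expProdSecondCoeff 𝕂 l + l.sum * a + (2 : 𝕂)⁻¹ • (a * a) := by
  induction l with
  | nil => simp [expProdSecondCoeff]
  | cons b l ih =>
    simp only [List.cons_append, expProdSecondCoeff, ih, List.sum_append, List.sum_cons,
      List.sum_nil, add_zero, mul_add, add_mul]
    abel

theorem expProdSecondCoeff_add_reverse (l : List 𝔸) :
    expProdSecondCoeff 𝕂 l + expProdSecondCoeff 𝕂 l.reverse = l.sum * l.sum := by
  induction l with
  | nil => simp [expProdSecondCoeff]
  | cons a l ih =>
    rw [List.reverse_cons, expProdSecondCoeff_append_singleton, List.sum_reverse,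
      expProdSecondCoeff, List.sum_cons]
    simp only [mul_add, add_mul]
    rw [← ih]
    module

variable [CompleteSpace 𝔸]

theorem hasSecondOrderExpansion_exp_smul (a : 𝔸) :
    HasSecondOrderExpansion (fun c : 𝕂 => exp (c • a)) a ((2 : 𝕂)⁻¹ • (a * a)) := by
  have hexp := ((exp_hasFPowerSeriesAt_zero (𝕂 := 𝕂) (𝔸 := 𝔸)).isBigO_sub_partialSum_pow
    3).comp_tendsto ((continuous_id.smul continuous_const).tendsto' (0 : 𝕂) 0 (zero_smul 𝕂 a))
  have hnorm : (fun c : 𝕂 => ‖c • a‖ ^ 3) =O[𝓝 0] fun c => c ^ 3 :=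
    isBigO_of_le' (c := ‖a‖ ^ 3) _ fun c => by simp [norm_smul, mul_pow, mul_comm]
  refine (hexp.trans hnorm).congr_left fun c => ?_
  simp [FormalMultilinearSeries.partialSum, Finset.sum_range_succ, expSeries_apply_eq, sq,
    smul_smul, mul_comm]

theorem hasSecondOrderExpansion_prod_exp_smul (l : List 𝔸) :
    HasSecondOrderExpansion (fun c : 𝕂 => (l.map fun a => exp (c • a)).prod) l.sum
      (expProdSecondCoeff 𝕂 l) := by
  induction l with
  | nil => simpa [HasSecondOrderExpansion, expProdSecondCoeff] using isBigO_zero _ _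
  | cons a l ih =>
    simpa [expProdSecondCoeff, add_assoc, Pi.mul_def] using
      (hasSecondOrderExpansion_exp_smul a).mul ih

end

theorem exists_bound_of_isBigO_pow {𝕜 E : Type*} [NormedDivisionRing 𝕜]
    [SeminormedAddCommGroup E] {f : 𝕜 → E} {n : ℕ} (hf : f =O[𝓝 0] fun c => c ^ n) :
    ∃ C > (0 : ℝ), ∃ δ > (0 : ℝ), ∀ c : 𝕜, ‖c‖ ≤ δ → ‖f c‖ ≤ C * ‖c‖ ^ n := by
  obtain ⟨C, hC, hfC⟩ := hf.exists_pos
  obtain ⟨δ, hδ, hball⟩ := Metric.nhds_basis_closedBall.eventually_iff.mp hfC.bound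
  exact ⟨C, hC, δ, hδ, fun c hc => by simpa using hball (by simpa using hc)⟩

/-- **Second-order cancellation for the random permutation protocol**: with
`S(t) = ∏_{k=1}^{L} exp(t Aₖ)` and `S_rev(t)` the reversed-order product,
`(1/2)(S(t) + S_rev(t)) - exp(t ∑ₖ Aₖ) = O(t³)` as `t → 0`. -/
theorem stmt11 {𝔸 : Type*} [NormedRing 𝔸] [NormedAlgebra ℂ 𝔸] [CompleteSpace 𝔸]
    {L : ℕ} (A : Fin L → 𝔸) :
    ∃ C > (0 : ℝ), ∃ δ > (0 : ℝ), ∀ t : ℝ, |t| ≤ δ →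
      ‖((1 / 2 : ℂ)) •
          ((((List.finRange L).map fun k => NormedSpace.exp ((t : ℂ) • A k)).prod) +
            ((((List.finRange L).map fun k => NormedSpace.exp ((t : ℂ) • A k)).reverse).prod)) -
        NormedSpace.exp ((t : ℂ) • ∑ k, A k)‖ ≤ C * |t| ^ 3 := by
  set l := (List.finRange L).map A
  have hS := hasSecondOrderExpansion_prod_exp_smul (𝕂 := ℂ) l
  have hR := hasSecondOrderExpansion_prod_exp_smul (𝕂 := ℂ) l.reverse
  rw [List.sum_reverse] at hR
  have hmid := hS.midpoint hR
  rw [expProdSecondCoeff_add_reverse] at hmid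
  obtain ⟨C, hC, δ, hδ, hbound⟩ :=
    exists_bound_of_isBigO_pow (hmid.isBigO_sub (hasSecondOrderExpansion_exp_smul l.sum))
  refine ⟨C, hC, δ, hδ, fun t ht => ?_⟩
  simpa [l, one_div, Fin.sum_univ_def, List.map_map, Function.comp_def, List.map_reverse]
    using hbound t (by simpa using ht)
end

section
/- Let σ_0 = I, σ_1 = X, σ_2 = Y, σ_3 = Z be the 2×2 identity and Pauli matrices, and for f : Fin n → Fin 4 let P(f) = σ_{f(1)} ⊗ σ_{f(2)} ⊗ ⋯ ⊗ σ_{f(n)} be the n-fold Kronecker product. For f, g : Fin n → Fin 4, let D(f,g) = #{ i : f(i) ≠ 0, g(i) ≠ 0, and f(i) ≠ g(i) } be the number of positions where the two strings carry distinct non-identity Pauli operators. Then P(f) and P(g) commute (P(f)P(g) = P(g)P(f)) if D(f,g) is even, and anticommute (P(f)P(g) = −P(g)P(f)) if D(f,g) is odd. -/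
/-- The single-qubit Pauli matrices `σ₀ = I`, `σ₁ = X`, `σ₂ = Y`, `σ₃ = Z`. -/
def pauli : Fin 4 → Matrix (Fin 2) (Fin 2) ℂ
  | 0 => 1
  | 1 => !![0, 1; 1, 0]
  | 2 => !![0, -Complex.I; Complex.I, 0]
  | 3 => !![1, 0; 0, -1]

/-- The `n`-fold tensor (Kronecker) product `σ_{f 1} ⊗ σ_{f 2} ⊗ ⋯ ⊗ σ_{f n}`,
represented as a matrix indexed by tuples of single-qubit basis indices. -/
def pauliString {n : ℕ} (f : Fin n → Fin 4) :
    Matrix (Fin n → Fin 2) (Fin n → Fin 2) ℂ :=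
  fun x y => ∏ i, pauli (f i) (x i) (y i)

/-- The number of positions where the two Pauli strings carry distinct
non-identity Pauli operators. -/
def pauliDiff {n : ℕ} (f g : Fin n → Fin 4) : ℕ :=
  (Finset.univ.filter fun i => f i ≠ 0 ∧ g i ≠ 0 ∧ f i ≠ g i).card

lemma pauli_comm (a b : Fin 4) :
    pauli a * pauli b =
      (if a ≠ 0 ∧ b ≠ 0 ∧ a ≠ b then (-1 : ℂ) else 1) • (pauli b * pauli a) := by
  fin_cases a <;> fin_cases b <;>
    first
    | simp [pauli]
    | (ext i j
       fin_cases i <;> fin_cases j <;>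
         simp [pauli, Matrix.mul_apply, Fin.sum_univ_two] <;> ring)

lemma pauliString_mul {n : ℕ} (f g : Fin n → Fin 4) (x y : Fin n → Fin 2) :
    (pauliString f * pauliString g) x y = ∏ i, (pauli (f i) * pauli (g i)) (x i) (y i) := by
  simp only [Matrix.mul_apply, pauliString, Fintype.prod_sum, Finset.prod_mul_distrib]

lemma key {n : ℕ} (f g : Fin n → Fin 4) :
    pauliString f * pauliString g =
      ((-1 : ℂ) ^ pauliDiff f g) • (pauliString g * pauliString f) := by
  ext x y
  rw [Matrix.smul_apply, pauliString_mul, pauliString_mul, smul_eq_mul]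
  have : ∀ i : Fin n, (pauli (f i) * pauli (g i)) (x i) (y i) =
      (if f i ≠ 0 ∧ g i ≠ 0 ∧ f i ≠ g i then (-1 : ℂ) else 1) *
        (pauli (g i) * pauli (f i)) (x i) (y i) := by
    intro i
    rw [pauli_comm (f i) (g i)]
    simp
  simp_rw [this, Finset.prod_mul_distrib]
  congr 1
  rw [Finset.prod_ite, Finset.prod_const, Finset.prod_const, one_pow, mul_one, pauliDiff]

/-- **Theorem 3**: two Pauli strings commute if the number of positions at which they
carry distinct non-identity Pauli operators is even, and anticommute if it is odd. -/
theorem stmt12 {n : ℕ} (f g : Fin n → Fin 4) :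
    (Even (pauliDiff f g) → pauliString f * pauliString g = pauliString g * pauliString f) ∧
    (Odd (pauliDiff f g) → pauliString f * pauliString g = -(pauliString g * pauliString f)) := by
  constructor
  · intro h
    rw [key f g, h.neg_one_pow, one_smul]
  · intro h
    rw [key f g, h.neg_one_pow, neg_one_smul]
end
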